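/- Let X be a compactum (a compact perfect metric space with more than one point), let n ≥ 2 be an integer, and let f : X → X be a continuous map. Then F_n(f) is two-sided transitive if and only if SF_n(f) is two-sided transitive; moreover, if F_n(f) is two-sided transitive, then f is two-sided transitive. -/

import Mathlib

open Metric Set TopologicalSpace

variable (X : Type*) [MetricSpace X] (n : ℕ)

/-- The `n`-fold symmetric product `F_n(X)`: nonempty subsets of `X` with at most `n`
points, as a subspace of the nonempty compact subsets of `X` with the Hausdorff metric. -/
abbrev Fn := {A : NonemptyCompacts X // (A : Set X).Finite ∧ (A : Set X).ncard ≤ n}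

/-- The induced map `F_n(f)` on the `n`-fold symmetric product, `A ↦ f(A)`. -/
noncomputable def FnMap (f : X → X) : Fn X n → Fn X n := fun A =>
  ⟨⟨⟨f '' (A.1 : Set X), (A.2.1.image f).isCompact⟩, A.1.nonempty.image f⟩,
    A.2.1.image f, le_trans (Set.ncard_image_le A.2.1) A.2.2⟩

/-- `F_1(X) ⊆ F_n(X)`: the set of singletons. -/
def F1 : Set (Fn X n) := {A | ∃ x : X, (A.1 : Set X) = {x}}

/-- The setoid collapsing `F_1(X)` to a point. -/
def SFnSetoid : Setoid (Fn X n) where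
  r A B := A = B ∨ (A ∈ F1 X n ∧ B ∈ F1 X n)
  iseqv := by
    refine ⟨fun _ => Or.inl rfl, fun h => h.imp Eq.symm And.symm, fun h₁ h₂ => ?_⟩
    rcases h₁ with rfl | h₁
    · exact h₂
    · rcases h₂ with rfl | h₂
      · exact Or.inr h₁
      · exact Or.inr ⟨h₁.1, h₂.2⟩

/-- The `n`-fold symmetric product suspension `SF_n(X) = F_n(X)/F_1(X)`,
with the quotient topology. -/
abbrev SFn := Quotient (SFnSetoid X n)

/-- The quotient map `q : F_n(X) → SF_n(X)`. -/
def SFnQ : Fn X n → SFn X n := Quotient.mk (SFnSetoid X n)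

/-- The induced map `SF_n(f)` on the suspension, with `SF_n(f) ∘ q = q ∘ F_n(f)`. -/
noncomputable def SFnMap (f : X → X) : SFn X n → SFn X n :=
  Quotient.lift (fun A => SFnQ X n (FnMap X n f A))
    (fun A B h => Quotient.sound (by
      rcases h with rfl | ⟨⟨x, hx⟩, ⟨y, hy⟩⟩
      · exact Or.inl rfl
      · exact Or.inr ⟨⟨f x, by simp [FnMap, hx]⟩, ⟨f y, by simp [FnMap, hy]⟩⟩))

/-- The metric `ρ` on `SF_n(X)`:
`ρ(χ₁,χ₂) = H(F_1(X) ∪ q⁻¹(χ₁), F_1(X) ∪ q⁻¹(χ₂))` where `H` is the Hausdorff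
distance between subsets of `F_n(X)`. -/
noncomputable def SFnDist : SFn X n → SFn X n → ℝ := fun a b =>
  Metric.hausdorffDist (F1 X n ∪ SFnQ X n ⁻¹' {a}) (F1 X n ∪ SFnQ X n ⁻¹' {b})

/-- `g` is two-sided transitive: `g` is a homeomorphism and some full orbit
`{g^k(z) : k ∈ ℤ}` is dense. -/
def TwoSidedTransitive {Z : Type*} [TopologicalSpace Z] (g : Z → Z) : Prop :=
  IsHomeomorph g ∧ ∃ e : Equiv.Perm Z, ⇑e = g ∧
    ∃ z : Z, Dense (Set.range fun k : ℤ => (e ^ k) z)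

/-! If `F_n(f)` or `SF_n(f)` is bijective then so is `f` (test on singletons and doubletons), so `f`
is a homeomorphism `σ` of the compactum `X`, and all three maps are permutations induced by `σ`,
with `q ∘ F_n(σ)^k = SF_n(σ)^k ∘ q`. Hence `q` maps a dense orbit of `F_n(X)` onto a dense orbit of
`SF_n(X)`. Conversely, `q` is injective and open off the closed set `F_1(X)`, and, `X` being
perfect, every open set of `F_n(X)` leaves `F_1(X)`; so a dense orbit downstairs lifts to a dense
orbit upstairs. Finally, if the orbit of `A` comes close to a singleton `{u}`, so does the
`σ`-orbit of each point of `A`. -/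

open Function Equiv

theorem twoSidedTransitive_iff {Z : Type*} [TopologicalSpace Z] (e : Perm Z)
    (he : IsHomeomorph e) :
    TwoSidedTransitive e ↔ ∃ z, Dense (range fun k : ℤ => (e ^ k) z) := by
  refine ⟨fun ⟨_, e', he', hz⟩ => ?_, fun h => ⟨he, e, rfl, h⟩⟩
  obtain rfl : e' = e := Equiv.ext (congrFun he')
  exact hz

section SymmetricProduct

variable {X : Type*} [MetricSpace X] {n : ℕ}

theorem Fn.ext {A B : Fn X n} (h : (A.1 : Set X) = B.1) : A = B :=
  Subtype.ext (NonemptyCompacts.ext h)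

theorem Fn.dist_eq (A B : Fn X n) : dist A B = hausdorffDist (A.1 : Set X) B.1 := rfl

theorem Fn.hausdorffEDist_ne_top (A B : Fn X n) : hausdorffEDist (A.1 : Set X) B.1 ≠ ⊤ :=
  hausdorffEDist_ne_top_of_nonempty_of_bounded A.1.nonempty B.1.nonempty
    A.1.isCompact.isBounded B.1.isCompact.isBounded

theorem coe_FnMap (g : X → X) (A : Fn X n) : ((FnMap X n g A).1 : Set X) = g '' A.1 := rfl

variable (n) in
def Fn.singleton (hn : 1 ≤ n) (x : X) : Fn X n :=
  ⟨⟨⟨{x}, isCompact_singleton⟩, singleton_nonempty x⟩, finite_singleton x,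
    (ncard_singleton x).trans_le hn⟩

variable (n) in
def Fn.pair (hn : 2 ≤ n) (x y : X) : Fn X n :=
  ⟨⟨⟨{x, y}, ((finite_singleton y).insert x).isCompact⟩, insert_nonempty x {y}⟩,
    (finite_singleton y).insert x,
    ((ncard_insert_le x {y}).trans (by rw [ncard_singleton])).trans hn⟩

theorem Fn.singleton_injective (hn : 1 ≤ n) : Injective (Fn.singleton (X := X) n hn) :=
  fun _ _ h => singleton_eq_singleton_iff.1 (congrArg (fun A : Fn X n => (A.1 : Set X)) h)

theorem Fn.isometry_singleton (hn : 1 ≤ n) : Isometry (Fn.singleton (X := X) n hn) :=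
  Isometry.of_dist_eq fun _ _ => hausdorffDist_singleton

theorem Fn.singleton_mem_F1 (hn : 1 ≤ n) (x : X) : Fn.singleton n hn x ∈ F1 X n := ⟨x, rfl⟩

theorem Fn.pair_mem_F1_iff (hn : 2 ≤ n) {x y : X} : Fn.pair n hn x y ∈ F1 X n ↔ x = y := by
  refine ⟨fun ⟨z, hz⟩ => ?_, fun h => ⟨x, by simp [Fn.pair, h]⟩⟩
  have hx : x ∈ ({z} : Set X) := hz ▸ mem_insert x {y}
  have hy : y ∈ ({z} : Set X) := hz ▸ mem_insert_of_mem x rfl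
  exact hx.trans hy.symm

theorem FnMap_singleton (hn : 1 ≤ n) (g : X → X) (x : X) :
    FnMap X n g (Fn.singleton n hn x) = Fn.singleton n hn (g x) :=
  Fn.ext (image_singleton)

theorem FnMap_mem_F1 {g : X → X} {A : Fn X n} (hA : A ∈ F1 X n) : FnMap X n g A ∈ F1 X n := by
  obtain ⟨x, hx⟩ := hA
  exact ⟨g x, by rw [coe_FnMap, hx, image_singleton]⟩

theorem F1_eq_range_singleton (hn : 1 ≤ n) : F1 X n = range (Fn.singleton (X := X) n hn) :=
  Set.ext fun _ => ⟨fun ⟨x, hx⟩ => ⟨x, Fn.ext hx.symm⟩, fun ⟨x, hx⟩ => ⟨x, hx ▸ rfl⟩⟩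

theorem isClosed_F1 [CompactSpace X] (hn : 1 ≤ n) : IsClosed (F1 X n) := by
  rw [F1_eq_range_singleton hn]
  exact (isCompact_range (Fn.isometry_singleton hn).continuous).isClosed

theorem Fn.dist_le_dist_singleton (hn : 1 ≤ n) {A : Fn X n} {x : X} (hx : x ∈ (A.1 : Set X))
    (u : X) : dist x u ≤ dist A (Fn.singleton n hn u) := by
  rw [← infDist_singleton, Fn.dist_eq]
  exact infDist_le_hausdorffDist_of_mem hx (Fn.hausdorffEDist_ne_top A (Fn.singleton n hn u))

theorem exists_mem_notMem_F1 (hX : Perfect (univ : Set X)) (hn : 2 ≤ n) {U : Set (Fn X n)}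
    (hU : IsOpen U) (hUne : U.Nonempty) : ∃ B ∈ U, B ∉ F1 X n := by
  obtain ⟨A, hA⟩ := hUne
  refine (em (A ∈ F1 X n)).elim (fun ⟨x, hx⟩ => ?_) fun hAF1 => ⟨A, hA, hAF1⟩
  obtain ⟨ε, hε, hball⟩ := Metric.isOpen_iff.1 hU A hA
  obtain ⟨y, hy, hyx⟩ := accPt_iff_nhds.1 (hX.acc x (mem_univ x)) _ (ball_mem_nhds x hε)
  refine ⟨Fn.pair n hn x y, hball ?_, mt (Fn.pair_mem_F1_iff hn).1 (Ne.symm hyx)⟩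
  have hdist : dist (Fn.pair n hn x y) A ≤ dist y x := by
    rw [Fn.dist_eq, hx]
    refine hausdorffDist_le_of_mem_dist dist_nonneg ?_ fun z hz => ⟨y, mem_insert_of_mem x rfl, ?_⟩
    · rintro z (rfl | rfl)
      · exact ⟨z, rfl, by simp⟩
      · exact ⟨x, rfl, le_rfl⟩
    · rw [hz, dist_comm]
  exact hdist.trans_lt (mem_ball.1 hy.1)

theorem FnMap_continuous [CompactSpace X] {g : X → X} (hg : Continuous g) :
    Continuous (FnMap X n g) := by
  refine Metric.continuous_iff.2 fun A ε hε => ?_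
  obtain ⟨δ, hδ, hgδ⟩ := Metric.uniformContinuous_iff.1
    (CompactSpace.uniformContinuous_of_continuous hg) (ε / 2) (half_pos hε)
  have close_images : ∀ C D : Fn X n, dist C D < δ →
      ∀ y ∈ g '' (C.1 : Set X), ∃ z ∈ g '' (D.1 : Set X), dist y z ≤ ε / 2 := by
    rintro C D hCD _ ⟨c, hc, rfl⟩
    obtain ⟨d, hd, hcd⟩ := exists_dist_lt_of_hausdorffDist_lt hc hCD (Fn.hausdorffEDist_ne_top C D)
    exact ⟨g d, mem_image_of_mem g hd, (hgδ hcd).le⟩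
  refine ⟨δ, hδ, fun B hB => ?_⟩
  have hB' : dist A B < δ := by rwa [dist_comm]
  calc dist (FnMap X n g B) (FnMap X n g A)
      ≤ ε / 2 := hausdorffDist_le_of_mem_dist (half_pos hε).le
          (close_images B A hB) (close_images A B hB')
    _ < ε := half_lt_self hε

end SymmetricProduct

section Suspension

variable {X : Type*} [MetricSpace X] {n : ℕ}

theorem SFnQ_eq_iff {A B : Fn X n} :
    SFnQ X n A = SFnQ X n B ↔ A = B ∨ (A ∈ F1 X n ∧ B ∈ F1 X n) :=
  Quotient.eq

theorem eq_of_SFnQ_eq {A B : Fn X n} (h : SFnQ X n A = SFnQ X n B) (hB : B ∉ F1 X n) : A = B :=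
  (SFnQ_eq_iff.1 h).resolve_right fun hAB => hB hAB.2

theorem mem_F1_of_SFnQ_eq {A B : Fn X n} (h : SFnQ X n A = SFnQ X n B) (hB : B ∈ F1 X n) :
    A ∈ F1 X n :=
  (SFnQ_eq_iff.1 h).elim (· ▸ hB) And.left

theorem SFnQ_surjective : Surjective (SFnQ X n) := Quotient.exists_rep

theorem isQuotientMap_SFnQ : Topology.IsQuotientMap (SFnQ X n) := isQuotientMap_quotient_mk'

theorem isOpen_SFnQ_image {V : Set (Fn X n)} (hV : IsOpen V) (hVF1 : Disjoint V (F1 X n)) :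
    IsOpen (SFnQ X n '' V) := by
  have hsat : SFnQ X n ⁻¹' (SFnQ X n '' V) = V := by
    refine Subset.antisymm ?_ (subset_preimage_image _ _)
    rintro B ⟨C, hC, hCB⟩
    exact eq_of_SFnQ_eq hCB.symm (hVF1.notMem_of_mem_left hC) ▸ hC
  rwa [← isQuotientMap_SFnQ.isOpen_preimage, hsat]

theorem SFnMap_continuous [CompactSpace X] {g : X → X} (hg : Continuous g) :
    Continuous (SFnMap X n g) :=
  Continuous.quotient_lift (isQuotientMap_SFnQ.continuous.comp (FnMap_continuous hg)) _

end Suspension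

section Induced

variable {X : Type*} [MetricSpace X] {n : ℕ}

theorem bijective_of_bijective_FnMap (hn : 1 ≤ n) {f : X → X}
    (h : Bijective (FnMap X n f)) : Bijective f := by
  refine ⟨fun x y hxy => Fn.singleton_injective hn (h.1 ?_), fun x => ?_⟩
  · rw [FnMap_singleton, FnMap_singleton, hxy]
  · obtain ⟨A, hA⟩ := h.2 (Fn.singleton n hn x)
    obtain ⟨a, ha⟩ := A.1.nonempty
    have himage : f '' (A.1 : Set X) = {x} := by rw [← coe_FnMap, hA]; rfl
    exact ⟨a, (himage ▸ mem_image_of_mem f ha : f a ∈ ({x} : Set X))⟩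

theorem bijective_of_bijective_SFnMap [Nontrivial X] (hn : 2 ≤ n) {f : X → X}
    (h : Bijective (SFnMap X n f)) : Bijective f := by
  have hn1 : 1 ≤ n := by omega
  refine ⟨fun a b hab => ?_, fun x => ?_⟩
  · have hpair : FnMap X n f (Fn.pair n hn a b) ∈ F1 X n :=
      ⟨f a, show f '' {a, b} = {f a} by rw [image_pair, hab, pair_eq_singleton]⟩
    have hq : SFnQ X n (Fn.pair n hn a b) = SFnQ X n (Fn.singleton n hn1 a) :=
      h.1 (SFnQ_eq_iff.2 (Or.inr ⟨hpair, FnMap_mem_F1 (Fn.singleton_mem_F1 hn1 a)⟩))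
    exact (Fn.pair_mem_F1_iff hn).1 (mem_F1_of_SFnQ_eq hq (Fn.singleton_mem_F1 hn1 a))
  · obtain ⟨y, hy⟩ := exists_ne x
    obtain ⟨χ, hχ⟩ := h.2 (SFnQ X n (Fn.pair n hn x y))
    obtain ⟨A, rfl⟩ := SFnQ_surjective χ
    have hA : FnMap X n f A = Fn.pair n hn x y :=
      eq_of_SFnQ_eq hχ (mt (Fn.pair_mem_F1_iff hn).1 hy.symm)
    have hx : x ∈ f '' (A.1 : Set X) := by
      rw [← coe_FnMap, hA]
      exact mem_insert x {y}
    obtain ⟨a, -, ha⟩ := hx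
    exact ⟨a, ha⟩

variable (n) in
noncomputable def fnPerm : Perm X →* Perm (Fn X n) where
  toFun σ :=
    { toFun := FnMap X n σ
      invFun := FnMap X n σ.symm
      left_inv := fun A => Fn.ext (σ.symm_image_image (A.1 : Set X))
      right_inv := fun A => Fn.ext (σ.image_symm_image (A.1 : Set X)) }
  map_one' := Equiv.ext fun A => Fn.ext (image_id (A.1 : Set X))
  map_mul' σ τ := Equiv.ext fun A => Fn.ext (image_comp σ τ (A.1 : Set X))

variable (n) in
noncomputable def sfnPerm : Perm X →* Perm (SFn X n) where
  toFun σ :=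
    { toFun := SFnMap X n σ
      invFun := SFnMap X n σ.symm
      left_inv := Quotient.ind fun A =>
        congrArg (SFnQ X n) (Fn.ext (σ.symm_image_image (A.1 : Set X)))
      right_inv := Quotient.ind fun A =>
        congrArg (SFnQ X n) (Fn.ext (σ.image_symm_image (A.1 : Set X))) }
  map_one' := Equiv.ext <| Quotient.ind fun A =>
    congrArg (SFnQ X n) (Fn.ext (image_id (A.1 : Set X)))
  map_mul' σ τ := Equiv.ext <| Quotient.ind fun A =>
    congrArg (SFnQ X n) (Fn.ext (image_comp σ τ (A.1 : Set X)))

theorem coe_fnPerm_zpow_apply (σ : Perm X) (k : ℤ) (A : Fn X n) :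
    (((fnPerm n σ ^ k) A).1 : Set X) = (σ ^ k) '' A.1 := by
  rw [← map_zpow]
  rfl

theorem SFnQ_fnPerm_zpow_apply (σ : Perm X) (k : ℤ) (A : Fn X n) :
    SFnQ X n ((fnPerm n σ ^ k) A) = (sfnPerm n σ ^ k) (SFnQ X n A) := by
  rw [← map_zpow, ← map_zpow]
  rfl

variable [CompactSpace X]

theorem isHomeomorph_FnMap (σ : X ≃ₜ X) : IsHomeomorph (FnMap X n σ) :=
  (Homeomorph.mk (fnPerm n σ.toEquiv) (FnMap_continuous σ.continuous)
    (FnMap_continuous σ.symm.continuous)).isHomeomorph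

theorem isHomeomorph_SFnMap (σ : X ≃ₜ X) : IsHomeomorph (SFnMap X n σ) :=
  (Homeomorph.mk (sfnPerm n σ.toEquiv) (SFnMap_continuous σ.continuous)
    (SFnMap_continuous σ.symm.continuous)).isHomeomorph

end Induced

section Orbits

variable {X : Type*} [MetricSpace X] {n : ℕ}

theorem dense_sfnPerm_orbit_of_dense_fnPerm_orbit {σ : Perm X} {A : Fn X n}
    (hA : Dense (range fun k : ℤ => (fnPerm n σ ^ k) A)) :
    Dense (range fun k : ℤ => (sfnPerm n σ ^ k) (SFnQ X n A)) := by
  have horbit : (range fun k : ℤ => (sfnPerm n σ ^ k) (SFnQ X n A)) =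
      SFnQ X n '' range fun k : ℤ => (fnPerm n σ ^ k) A := by
    simp only [← range_comp, comp_def, SFnQ_fnPerm_zpow_apply]
  rw [horbit]
  exact SFnQ_surjective.denseRange.dense_image isQuotientMap_SFnQ.continuous hA

theorem dense_fnPerm_orbit_of_dense_sfnPerm_orbit [CompactSpace X] (hX : Perfect (univ : Set X)) (hn : 2 ≤ n)
    {σ : Perm X} {A : Fn X n} (hA : Dense (range fun k : ℤ => (sfnPerm n σ ^ k) (SFnQ X n A))) :
    Dense (range fun k : ℤ => (fnPerm n σ ^ k) A) := by
  refine dense_iff_inter_open.2 fun U hU hUne => ?_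
  obtain ⟨B, hBU, hBF1⟩ := exists_mem_notMem_F1 hX hn hU hUne
  have hV : IsOpen (SFnQ X n '' (U \ F1 X n)) :=
    isOpen_SFnQ_image (hU.sdiff (isClosed_F1 (by omega))) disjoint_sdiff_left
  obtain ⟨_, ⟨C, ⟨hCU, hCF1⟩, hC⟩, k, rfl⟩ :=
    hA.inter_open_nonempty _ hV ⟨SFnQ X n B, B, ⟨hBU, hBF1⟩, rfl⟩
  have hCk : SFnQ X n ((fnPerm n σ ^ k) A) = SFnQ X n C :=
    (SFnQ_fnPerm_zpow_apply σ k A).trans hC.symm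
  exact ⟨C, hCU, k, eq_of_SFnQ_eq hCk hCF1⟩

theorem dense_perm_orbit_of_dense_fnPerm_orbit (hn : 1 ≤ n) {σ : Perm X} {A : Fn X n}
    (hA : Dense (range fun k : ℤ => (fnPerm n σ ^ k) A)) {x : X} (hx : x ∈ (A.1 : Set X)) :
    Dense (range fun k : ℤ => (σ ^ k) x) := by
  refine Metric.dense_iff.2 fun u r hr => ?_
  obtain ⟨_, hball, k, rfl⟩ := Metric.dense_iff.1 hA (Fn.singleton n hn u) r hr
  have hmem : (σ ^ k) x ∈ (((fnPerm n σ ^ k) A).1 : Set X) := by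
    rw [coe_fnPerm_zpow_apply]
    exact mem_image_of_mem _ hx
  exact ⟨_, (Fn.dist_le_dist_singleton hn hmem u).trans_lt hball, k, rfl⟩

end Orbits

section Transitivity

variable {X : Type*} [MetricSpace X] [CompactSpace X] {n : ℕ}

theorem twoSidedTransitive_FnMap_iff (σ : X ≃ₜ X) :
    TwoSidedTransitive (FnMap X n σ) ↔
      ∃ A, Dense (range fun k : ℤ => (fnPerm n σ.toEquiv ^ k) A) :=
  twoSidedTransitive_iff (fnPerm n σ.toEquiv) (isHomeomorph_FnMap σ)

theorem twoSidedTransitive_SFnMap_iff (σ : X ≃ₜ X) :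
    TwoSidedTransitive (SFnMap X n σ) ↔
      ∃ χ, Dense (range fun k : ℤ => (sfnPerm n σ.toEquiv ^ k) χ) :=
  twoSidedTransitive_iff (sfnPerm n σ.toEquiv) (isHomeomorph_SFnMap σ)

end Transitivity

theorem stmt17 (X : Type*) [MetricSpace X] [CompactSpace X] [Nontrivial X]
    (hX : Perfect (Set.univ : Set X))
    (n : ℕ) (hn : 2 ≤ n) (f : X → X) (hf : Continuous f) :
    (TwoSidedTransitive (FnMap X n f) ↔ TwoSidedTransitive (SFnMap X n f)) ∧
    (TwoSidedTransitive (FnMap X n f) → TwoSidedTransitive f) := by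
  have hn1 : 1 ≤ n := by omega
  have homeomorph_of_bijective : Bijective f → ∃ σ : X ≃ₜ X, ⇑σ = f := fun hb =>
    ⟨hf.homeoOfEquivCompactToT2 (f := Equiv.ofBijective f hb), rfl⟩
  refine ⟨⟨fun h => ?_, fun h => ?_⟩, fun h => ?_⟩
  · obtain ⟨σ, rfl⟩ := homeomorph_of_bijective (bijective_of_bijective_FnMap hn1 h.1.bijective)
    obtain ⟨A, hA⟩ := (twoSidedTransitive_FnMap_iff σ).1 h
    exact (twoSidedTransitive_SFnMap_iff σ).2 ⟨_, dense_sfnPerm_orbit_of_dense_fnPerm_orbit hA⟩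
  · obtain ⟨σ, rfl⟩ := homeomorph_of_bijective (bijective_of_bijective_SFnMap hn h.1.bijective)
    obtain ⟨χ, hχ⟩ := (twoSidedTransitive_SFnMap_iff σ).1 h
    obtain ⟨A, rfl⟩ := SFnQ_surjective χ
    exact (twoSidedTransitive_FnMap_iff σ).2
      ⟨A, dense_fnPerm_orbit_of_dense_sfnPerm_orbit hX hn hχ⟩
  · obtain ⟨σ, rfl⟩ := homeomorph_of_bijective (bijective_of_bijective_FnMap hn1 h.1.bijective)
    obtain ⟨A, hA⟩ := (twoSidedTransitive_FnMap_iff σ).1 h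
    obtain ⟨x, hx⟩ := A.1.nonempty
    exact (twoSidedTransitive_iff σ.toEquiv σ.isHomeomorph).2
      ⟨x, dense_perm_orbit_of_dense_fnPerm_orbit hn1 hA hx⟩
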